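/- For the quasi-conformal coframe: (i) the two-indexed B-object ⁽²⁾B_{ab} = B^m{}_{mab} satisfies ⁽²⁾B_{ij} = −e^{−2f}φ_{ij} for all spatial i,j and ⁽²⁾B_{0a} = ⁽²⁾B_{a0} = 0; and (ii) the two-indexed B-object ⁽³⁾B_{ab} = B^m{}_{abm} vanishes identically: ⁽³⁾B_{ab} = 0 for all a,b. -/

import Mathlib

open scoped BigOperators

noncomputable section

/-- Partial derivative along coordinate `i` on `ℝ³`. -/
def pd (i : Fin 3) (f : (Fin 3 → ℝ) → ℝ) : (Fin 3 → ℝ) → ℝ :=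
  fun x => fderiv ℝ f x (Pi.single i 1)

/-- Partial derivative indexed by a 4-index: zero for the time index `0`. -/
def pd4 (f : (Fin 3 → ℝ) → ℝ) (p : Fin 4) : (Fin 3 → ℝ) → ℝ :=
  if h : p = 0 then 0 else pd (p.pred h) f

/-- Signs of the Minkowski metric `η = diag(1,−1,−1,−1)`. -/
def epsM (a : Fin 4) : ℝ := if a = 0 then 1 else -1

/-- The Minkowski metric `η = diag(1,−1,−1,−1)`. -/
def etaM (a b : Fin 4) : ℝ := if a = b then epsM a else 0

/-- Anholonomity objects `C^a_{mn}` of the quasi-conformal coframe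
`ϑ⁰ = e^{−f}dt`, `ϑⁱ = e^{f}dxⁱ`:  `C⁰_{0i} = e^{−f}fᵢ`, `C^i_{ij} = −e^{−f}fⱼ`
(spatial `i ≠ j`), antisymmetric in the lower pair, all other components zero. -/
def Cob (f : (Fin 3 → ℝ) → ℝ) (a m n : Fin 4) : (Fin 3 → ℝ) → ℝ := fun x =>
  if a = 0 then
    Real.exp (-f x) * ((if m = 0 then pd4 f n x else 0) - (if n = 0 then pd4 f m x else 0))
  else
    Real.exp (-f x) * ((if n = a then pd4 f m x else 0) - (if m = a then pd4 f n x else 0))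

/-- The contraction `C_a := C^m_{am}`. -/
def Cone (f : (Fin 3 → ℝ) → ℝ) (a : Fin 4) : (Fin 3 → ℝ) → ℝ :=
  fun x => ∑ m : Fin 4, Cob f m a m x

/-- The B-objects `B^a_{mn0} := 0`, `B^a_{mnp} := e^{−f} ∂_p C^a_{mn}` for `p = 1,2,3`. -/
def Bob (f : (Fin 3 → ℝ) → ℝ) (a m n p : Fin 4) : (Fin 3 → ℝ) → ℝ :=
  fun x => Real.exp (-f x) * pd4 (Cob f a m n) p x

/-- `⁽¹⁾B_{ab} := B_{abm}{}^m` (indices moved with `η`). -/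
def B1 (f : (Fin 3 → ℝ) → ℝ) (a b : Fin 4) : (Fin 3 → ℝ) → ℝ :=
  fun x => epsM a * ∑ m : Fin 4, epsM m * Bob f a b m m x

/-- `⁽²⁾B_{ab} := B^m{}_{mab}`. -/
def B2 (f : (Fin 3 → ℝ) → ℝ) (a b : Fin 4) : (Fin 3 → ℝ) → ℝ :=
  fun x => ∑ m : Fin 4, Bob f m m a b x

/-- `⁽³⁾B_{ab} := B^m{}_{abm}`. -/
def B3 (f : (Fin 3 → ℝ) → ℝ) (a b : Fin 4) : (Fin 3 → ℝ) → ℝ :=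
  fun x => ∑ m : Fin 4, Bob f m a b m x

/-- The scalar B-object `B := η^{ab}⁽¹⁾B_{ab}`. -/
def Bscalar (f : (Fin 3 → ℝ) → ℝ) : (Fin 3 → ℝ) → ℝ :=
  fun x => ∑ a : Fin 4, epsM a * B1 f a a x

/-- `⁽¹⁾A_{ab} := C_{abm}C^m`. -/
def A1 (f : (Fin 3 → ℝ) → ℝ) (a b : Fin 4) : (Fin 3 → ℝ) → ℝ :=
  fun x => epsM a * ∑ m : Fin 4, epsM m * Cob f a b m x * Cone f m x

/-- `⁽²⁾A_{ab} := C_{mab}C^m`. -/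
def A2 (f : (Fin 3 → ℝ) → ℝ) (a b : Fin 4) : (Fin 3 → ℝ) → ℝ :=
  fun x => ∑ m : Fin 4, Cob f m a b x * Cone f m x

/-- `⁽³⁾A_{ab} := C_{amn}C_b{}^{mn}`. -/
def A3 (f : (Fin 3 → ℝ) → ℝ) (a b : Fin 4) : (Fin 3 → ℝ) → ℝ :=
  fun x => epsM a * epsM b *
    ∑ m : Fin 4, ∑ n : Fin 4, epsM m * epsM n * Cob f a m n x * Cob f b m n x

/-- `⁽⁴⁾A_{ab} := C_{amn}C^m{}_b{}^n`. -/
def A4 (f : (Fin 3 → ℝ) → ℝ) (a b : Fin 4) : (Fin 3 → ℝ) → ℝ :=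
  fun x => epsM a * ∑ m : Fin 4, ∑ n : Fin 4, epsM n * Cob f a m n x * Cob f m b n x

/-- `⁽⁵⁾A_{ab} := C_{man}C^n{}_b{}^m`. -/
def A5 (f : (Fin 3 → ℝ) → ℝ) (a b : Fin 4) : (Fin 3 → ℝ) → ℝ :=
  fun x => ∑ m : Fin 4, ∑ n : Fin 4, Cob f m a n x * Cob f n b m x

/-- `⁽⁶⁾A_{ab} := C_{man}C^m{}_b{}^n`. -/
def A6 (f : (Fin 3 → ℝ) → ℝ) (a b : Fin 4) : (Fin 3 → ℝ) → ℝ :=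
  fun x => ∑ m : Fin 4, ∑ n : Fin 4, epsM m * epsM n * Cob f m a n x * Cob f m b n x

/-- `⁽⁷⁾A_{ab} := C_a C_b`. -/
def A7 (f : (Fin 3 → ℝ) → ℝ) (a b : Fin 4) : (Fin 3 → ℝ) → ℝ :=
  fun x => Cone f a x * Cone f b x

/-- `⁽¹⁾A := η^{ab}⁽¹⁾A_{ab}`. -/
def A1s (f : (Fin 3 → ℝ) → ℝ) : (Fin 3 → ℝ) → ℝ :=
  fun x => ∑ a : Fin 4, epsM a * A1 f a a x

/-- `⁽²⁾A := η^{ab}⁽³⁾A_{ab}`. -/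
def A2s (f : (Fin 3 → ℝ) → ℝ) : (Fin 3 → ℝ) → ℝ :=
  fun x => ∑ a : Fin 4, epsM a * A3 f a a x

/-- `⁽³⁾A := η^{ab}⁽⁴⁾A_{ab}`. -/
def A3s (f : (Fin 3 → ℝ) → ℝ) : (Fin 3 → ℝ) → ℝ :=
  fun x => ∑ a : Fin 4, epsM a * A4 f a a x

/-- `φ_{ij} := f_{ij} − fᵢfⱼ`. -/
def phiM (f : (Fin 3 → ℝ) → ℝ) (i j : Fin 3) : (Fin 3 → ℝ) → ℝ :=
  fun x => pd i (pd j f) x - pd i f x * pd j f x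

/-- `Δ̃φ := φ₁₁ + φ₂₂ + φ₃₃`. -/
def tphi (f : (Fin 3 → ℝ) → ℝ) : (Fin 3 → ℝ) → ℝ :=
  fun x => ∑ i : Fin 3, phiM f i i x

/-- The Laplacian `Δf := f₁₁ + f₂₂ + f₃₃`. -/
def lap (f : (Fin 3 → ℝ) → ℝ) : (Fin 3 → ℝ) → ℝ :=
  fun x => ∑ i : Fin 3, pd i (pd i f) x

/-- `∇²f := f₁² + f₂² + f₃²`. -/
def grad2 (f : (Fin 3 → ℝ) → ℝ) : (Fin 3 → ℝ) → ℝ :=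
  fun x => ∑ i : Fin 3, pd i f x ^ 2

/-- The leading (second order) part
`L_{ab} = β₁⁽¹⁾B_{(ab)} + β₂⁽²⁾B_{(ab)} + β₃⁽³⁾B_{ab} + β₄η_{ab}B + β₅⁽¹⁾B_{[ab]} + β₆⁽²⁾B_{[ab]}`. -/
def Lmat (β₁ β₂ β₃ β₄ β₅ β₆ : ℝ) (f : (Fin 3 → ℝ) → ℝ) (a b : Fin 4) :
    (Fin 3 → ℝ) → ℝ := fun x =>
  β₁ * ((B1 f a b x + B1 f b a x) / 2) + β₂ * ((B2 f a b x + B2 f b a x) / 2) +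
  β₃ * B3 f a b x + β₄ * etaM a b * Bscalar f x +
  β₅ * ((B1 f a b x - B1 f b a x) / 2) + β₆ * ((B2 f a b x - B2 f b a x) / 2)

/-- The quadratic part `Q_{ab}`. -/
def Qmat (α₁ α₂ α₃ α₄ α₅ α₆ α₇ α₈ α₉ α₁₀ α₁₁ α₁₂ : ℝ) (f : (Fin 3 → ℝ) → ℝ)
    (a b : Fin 4) : (Fin 3 → ℝ) → ℝ := fun x =>
  α₁ * ((A1 f a b x + A1 f b a x) / 2) + α₂ * A2 f a b x + α₃ * A3 f a b x +
  α₄ * ((A4 f a b x + A4 f b a x) / 2) + α₅ * A5 f a b x + α₆ * A6 f a b x +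
  α₇ * A7 f a b x + α₈ * ((A1 f a b x - A1 f b a x) / 2) +
  α₉ * ((A4 f a b x - A4 f b a x) / 2) +
  etaM a b * (α₁₀ * A1s f x + α₁₁ * A2s f x + α₁₂ * A3s f x)

/-- `diag(β₁−β₄, β₁+β₄, β₁+β₄, β₁+β₄)`. -/
def diagM (β₁ β₄ : ℝ) (a b : Fin 4) : ℝ :=
  if a = b then (if a = 0 then β₁ - β₄ else β₁ + β₄) else 0

/-!
Write `h = e^{−f}`. Since `e^{−f} ∂_a f = −∂_a h`, the anholonomity objects are
`C^m{}_{ab} = η^{mb} ∂_a h − η^{ma} ∂_b h`, where `∂_0 = 0`. Contracting, `C^m{}_{ma} = ∂_a h`, so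
`⁽²⁾B_{ab} = h ∂_b ∂_a h`, while `⁽³⁾B_{ab} = h Σ_m ∂_m C^m{}_{ab} = h (∂_a ∂_b h − ∂_b ∂_a h)`
vanishes by the symmetry of second derivatives. Finally `∂_i ∂_j h = −h φ_{ij}`.
-/

lemma pd4_zero (g : (Fin 3 → ℝ) → ℝ) : pd4 g 0 = 0 := rfl

lemma pd4_succ (g : (Fin 3 → ℝ) → ℝ) (k : Fin 3) : pd4 g k.succ = pd k g := by
  simp [pd4, Fin.succ_ne_zero]

lemma contDiff_pd {g : (Fin 3 → ℝ) → ℝ} {n : ℕ∞} (hg : ContDiff ℝ (n + 1) g) (i : Fin 3) :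
    ContDiff ℝ n (pd i g) :=
  (hg.fderiv_right le_rfl).clm_apply contDiff_const

lemma contDiff_pd4 {g : (Fin 3 → ℝ) → ℝ} {n : ℕ∞} (hg : ContDiff ℝ (n + 1) g) (a : Fin 4) :
    ContDiff ℝ n (pd4 g a) := by
  cases a using Fin.cases with
  | zero => exact contDiff_const
  | succ k => simpa [pd4_succ] using contDiff_pd hg k

lemma pd_comm {g : (Fin 3 → ℝ) → ℝ} (hg : ContDiff ℝ 2 g) (i j : Fin 3) (x : Fin 3 → ℝ) :
    pd i (pd j g) x = pd j (pd i g) x := by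
  have hd : DifferentiableAt ℝ (fderiv ℝ g) x :=
    ((hg.fderiv_right (m := 1) le_rfl).differentiable one_ne_zero).differentiableAt
  have hsymm : IsSymmSndFDerivAt ℝ g x :=
    hg.contDiffAt.isSymmSndFDerivAt (by simp [minSmoothness_of_isRCLikeNormedField])
  have second (v w : Fin 3 → ℝ) :
      fderiv ℝ (fun y => fderiv ℝ g y w) x v = fderiv ℝ (fderiv ℝ g) x v w := by
    rw [fderiv_clm_apply hd (differentiableAt_const _)]
    simp
  exact (second _ _).trans ((hsymm _ _).trans (second _ _).symm)

lemma pd4_comm {g : (Fin 3 → ℝ) → ℝ} (hg : ContDiff ℝ 2 g) (a b : Fin 4) (x : Fin 3 → ℝ) :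
    pd4 (pd4 g a) b x = pd4 (pd4 g b) a x := by
  cases a using Fin.cases with
  | zero => cases b using Fin.cases <;> simp [pd4_zero, pd4_succ, pd]
  | succ i =>
    cases b using Fin.cases with
    | zero => simp [pd4_zero, pd4_succ, pd]
    | succ j => simpa only [pd4_succ] using pd_comm hg j i x

lemma pd_neg (g : (Fin 3 → ℝ) → ℝ) (i : Fin 3) (x : Fin 3 → ℝ) :
    pd i (fun y => -g y) x = -pd i g x := by
  simp [pd, fderiv_fun_neg]

lemma pd_mul {u v : (Fin 3 → ℝ) → ℝ} {x : Fin 3 → ℝ} (hu : DifferentiableAt ℝ u x)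
    (hv : DifferentiableAt ℝ v x) (i : Fin 3) :
    pd i (fun y => u y * v y) x = u x * pd i v x + v x * pd i u x := by
  simp [pd, fderiv_fun_mul hu hv]

lemma epsM_mul_pd4 (g : (Fin 3 → ℝ) → ℝ) (a : Fin 4) (y : Fin 3 → ℝ) :
    epsM a * pd4 g a y = -pd4 g a y := by
  cases a using Fin.cases <;> simp [epsM, pd4_zero, Fin.succ_ne_zero]

lemma sum_epsM : ∑ m, epsM m = -2 := by
  simp [Fin.sum_univ_four, epsM]
  norm_num

def expNeg (f : (Fin 3 → ℝ) → ℝ) : (Fin 3 → ℝ) → ℝ := fun y => Real.exp (-f y)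

section Coframe

variable {f : (Fin 3 → ℝ) → ℝ}

lemma contDiff_expNeg {n : ℕ∞} (hf : ContDiff ℝ n f) :
    ContDiff ℝ n (expNeg f) :=
  hf.neg.exp

lemma pd_expNeg (hf : Differentiable ℝ f) (i : Fin 3) :
    pd i (expNeg f) = fun y => -(expNeg f y * pd i f y) := by
  funext y
  show fderiv ℝ (fun y => Real.exp (-f y)) y _ = _
  rw [((hf y).hasFDerivAt.fun_neg.exp).fderiv]
  simp [expNeg, pd]

lemma pd4_expNeg (hf : Differentiable ℝ f) (a : Fin 4) (y : Fin 3 → ℝ) :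
    pd4 (expNeg f) a y = -(expNeg f y * pd4 f a y) := by
  cases a using Fin.cases <;> simp [pd4_zero, pd4_succ, pd_expNeg hf]

/-- With `h = e^{−f}`, this is `C^m{}_{ab} = η^{mb} ∂_a h − η^{ma} ∂_b h`. -/
lemma cob_eq (hf : Differentiable ℝ f) (m a b : Fin 4) (y : Fin 3 → ℝ) :
    Cob f m a b y = epsM m *
      ((if b = m then pd4 (expNeg f) a y else 0) - (if a = m then pd4 (expNeg f) b y else 0)) := by
  simp only [pd4_expNeg hf, Cob, epsM, expNeg]
  split_ifs <;> simp_all [pd4_zero]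

lemma pd4_cob (hf : ContDiff ℝ 2 f) (m a b p : Fin 4) (x : Fin 3 → ℝ) :
    pd4 (Cob f m a b) p x = epsM m *
      ((if b = m then pd4 (pd4 (expNeg f) a) p x else 0) -
        (if a = m then pd4 (pd4 (expNeg f) b) p x else 0)) := by
  have hd (c : Fin 4) : Differentiable ℝ (pd4 (expNeg f) c) :=
    (contDiff_pd4 (n := 1) (contDiff_expNeg hf) c).differentiable one_ne_zero
  rw [funext (cob_eq (hf.differentiable two_ne_zero) m a b)]
  cases p using Fin.cases with
  | zero => simp [pd4_zero]
  | succ k =>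
    simp only [pd4_succ, pd]
    by_cases hb : b = m <;> by_cases ha : a = m <;>
      simp [hb, ha, fderiv_const_mul, (hd _).differentiableAt]

lemma b2_eq (hf : ContDiff ℝ 2 f) (a b : Fin 4) (x : Fin 3 → ℝ) :
    B2 f a b x = expNeg f x * pd4 (pd4 (expNeg f) a) b x := by
  simp only [B2, Bob, pd4_cob hf, mul_sub, mul_ite, mul_zero, Finset.sum_sub_distrib,
    Finset.sum_ite_eq, Finset.mem_univ, if_true, ← Finset.mul_sum, ← Finset.sum_mul, sum_epsM]
  rw [pd4_comm (contDiff_expNeg hf) a b, epsM_mul_pd4, expNeg]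
  ring

lemma b3_eq_zero (hf : ContDiff ℝ 2 f) (a b : Fin 4) (x : Fin 3 → ℝ) :
    B3 f a b x = 0 := by
  simp only [B3, Bob, pd4_cob hf, mul_sub, mul_ite, mul_zero, Finset.sum_sub_distrib,
    Finset.sum_ite_eq, Finset.mem_univ, if_true, epsM_mul_pd4]
  rw [pd4_comm (contDiff_expNeg hf) a b]
  ring

lemma pd_pd_expNeg (hf : ContDiff ℝ 2 f) (i j : Fin 3) (x : Fin 3 → ℝ) :
    pd i (pd j (expNeg f)) x = -(expNeg f x * phiM f i j x) := by
  have hh : DifferentiableAt ℝ (expNeg f) x :=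
    (contDiff_expNeg hf).differentiable two_ne_zero x
  have hfj : DifferentiableAt ℝ (pd j f) x :=
    (contDiff_pd (n := 1) hf j).differentiable one_ne_zero x
  rw [pd_expNeg (hf.differentiable two_ne_zero), pd_neg, pd_mul hh hfj,
    pd_expNeg (hf.differentiable two_ne_zero), phiM]
  ring

end Coframe

/-- for the quasi-conformal coframe, (i) `⁽²⁾B_{ij} = −e^{−2f}φ_{ij}` for all
spatial `i,j` and `⁽²⁾B_{0a} = ⁽²⁾B_{a0} = 0`; (ii) `⁽³⁾B_{ab} = 0` identically. -/
theorem B2_B3_explicit (f : (Fin 3 → ℝ) → ℝ) (hf : ContDiff ℝ (⊤ : ℕ∞) f)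
    (x : Fin 3 → ℝ) :
    (∀ i j : Fin 3, B2 f i.succ j.succ x = -Real.exp (-2 * f x) * phiM f i j x) ∧
    (∀ a : Fin 4, B2 f 0 a x = 0 ∧ B2 f a 0 x = 0) ∧
    (∀ a b : Fin 4, B3 f a b x = 0) := by
  have hf2 : ContDiff ℝ 2 f := hf.of_le (WithTop.coe_le_coe.mpr le_top)
  refine ⟨fun i j => ?_, fun a => ⟨?_, ?_⟩, fun a b => b3_eq_zero hf2 a b x⟩
  · rw [b2_eq hf2, pd4_succ, pd4_succ, pd_comm (contDiff_expNeg hf2), pd_pd_expNeg hf2,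
      expNeg, show -2 * f x = -f x + -f x by ring, Real.exp_add]
    ring
  · rw [b2_eq hf2, pd4_comm (contDiff_expNeg hf2), pd4_zero, Pi.zero_apply, mul_zero]
  · rw [b2_eq hf2, pd4_zero, Pi.zero_apply, mul_zero]
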